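/- arXiv:2506.05841 — 3 statements merged into one kernel-verified Lean document; each statement's English description precedes it below -/
import Mathlib

section
/- Let R → S be a faithfully flat homomorphism of commutative rings, ι : M → R^r an injective R-linear map from a finitely generated R-module M, and s ∈ R^r. If the element s ⊗ 1 ∈ S^r ≅ R^r ⊗_R S lies in the image of the induced S-linear map M ⊗_R S → S^r, then s lies in the image of ι. -/
open scoped TensorProduct

universe u

/-- faithfully flat descent of membership: if `ι : M ↪ R^r` is injective,
`M` finitely generated, and `s ⊗ 1` lies in the image of `ι ⊗ id_S` for a faithfully flat
`R`-algebra `S`, then `s` lies in the image of `ι`. -/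
theorem mem_range_of_baseChange_mem_range
    (R S : Type u) [CommRing R] [CommRing S] [Algebra R S] [Module.Flat R S]
    (hff : ∀ (N : Type u) [AddCommGroup N] [Module R N],
      Subsingleton (S ⊗[R] N) → Subsingleton N)
    (r : ℕ) (M : Type u) [AddCommGroup M] [Module R M] [Module.Finite R M]
    (ι : M →ₗ[R] (Fin r → R)) (hι : Function.Injective ι) (s : Fin r → R)
    (hs : (1 : S) ⊗ₜ[R] s ∈ LinearMap.range (LinearMap.baseChange S ι)) :
    s ∈ LinearMap.range ι := by
  set Q := LinearMap.range ι
  -- the quotient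
  set N := (Fin r → R) ⧸ Q
  set x : N := Submodule.Quotient.mk s with hx
  -- `1 ⊗ x = 0` in `S ⊗ N`
  have key : ∀ m : S ⊗[R] M, (Q.mkQ.lTensor S) (LinearMap.baseChange S ι m) = 0 := by
    intro m
    induction m using TensorProduct.induction_on with
    | zero => simp
    | tmul a b =>
        simp only [LinearMap.baseChange_tmul, LinearMap.lTensor_tmul]
        have : Q.mkQ (ι b) = 0 := by
          simp [Q, Submodule.Quotient.mk_eq_zero]
        rw [this, TensorProduct.tmul_zero]
    | add a b ha hb => simp [map_add, ha, hb]
  have hx0 : (1 : S) ⊗ₜ[R] x = 0 := by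
    obtain ⟨m, hm⟩ := hs
    have : (1 : S) ⊗ₜ[R] x = (Q.mkQ.lTensor S) ((1 : S) ⊗ₜ[R] s) := rfl
    rw [this, ← hm]
    exact key m
  -- descend: `x = 0`
  have hx' : x = 0 := by
    set P := Submodule.span R ({x} : Set N)
    have hxP : x ∈ P := Submodule.mem_span_singleton_self x
    have hinj : Function.Injective (P.subtype.lTensor S) :=
      Module.Flat.lTensor_preserves_injective_linearMap P.subtype P.injective_subtype
    have h1 : (1 : S) ⊗ₜ[R] (⟨x, hxP⟩ : P) = 0 := by
      apply hinj
      simpa using hx0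
    have hsub : Subsingleton (S ⊗[R] P) := by
      refine subsingleton_iff_forall_eq 0 |>.mpr fun z => ?_
      induction z using TensorProduct.induction_on with
      | zero => rfl
      | tmul a p =>
          obtain ⟨c, hc⟩ := Submodule.mem_span_singleton.mp p.2
          have hp : (p : N) = c • x := hc.symm
          have : a ⊗ₜ[R] p = (c • a) ⊗ₜ[R] (⟨x, hxP⟩ : P) := by
            rw [TensorProduct.smul_tmul]
            congr 1
            exact Subtype.ext hp
          rw [this, show (c • a) ⊗ₜ[R] (⟨x, hxP⟩ : P) = (c • a) • ((1 : S) ⊗ₜ[R] (⟨x, hxP⟩ : P)) by rw [TensorProduct.smul_tmul', smul_eq_mul, mul_one], h1, smul_zero]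
      | add a b ha hb => rw [ha, hb, add_zero]
    have hP : Subsingleton P := hff P hsub
    have : (⟨x, hxP⟩ : P) = 0 := Subsingleton.elim _ _
    simpa using congrArg Subtype.val this
  rwa [hx, Submodule.Quotient.mk_eq_zero] at hx'
end

section
/- Let f = x⁴ + y⁴·x + y⁵ ∈ ℂ[x,y]. Then there exist no polynomials A, B ∈ ℂ[x,y] with A(0,0) = 0 and B(0,0) = 0 such that f = ∂(f·A)/∂x + ∂(f·B)/∂y. -/
/-!
Only the linear parts `A₁ = a₁₀x + a₀₁y`, `B₁ = b₁₀x + b₀₁y` of `A` and `B` contribute to the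
coefficients of `x⁴, x³y, x²y³, xy⁴, y⁵` in `∂(fA)/∂x + ∂(fB)/∂y`, and comparing these with the
coefficients of `f` gives
`5a₁₀ + b₀₁ = 1, 4a₀₁ = 0, 4b₁₀ = 0, 2a₁₀ + 5b₁₀ + 5b₀₁ = 1, a₁₀ + a₀₁ + 6b₀₁ = 1`.
This system is inconsistent as soon as `4 ≠ 0`: the combination with weights
`28, -23, 145, -116, 92` reads `4 = 0`.
-/

open MvPolynomial Finsupp

/-- The exponent of the monomial `x ^ p * y ^ q` in `MvPolynomial (Fin 2) R`. -/
noncomputable abbrev expo (p q : ℕ) : Fin 2 →₀ ℕ := single 0 p + single 1 q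

lemma expo_inj {p q r u : ℕ} : expo p q = expo r u ↔ p = r ∧ q = u := by
  simp [Finsupp.ext_iff, Fin.forall_fin_two]

lemma expo_le_expo {p q r u : ℕ} : expo r u ≤ expo p q ↔ r ≤ p ∧ u ≤ q := by
  simp [Finsupp.le_def, Fin.forall_fin_two]

lemma expo_sub_expo (p q r u : ℕ) : expo p q - expo r u = expo (p - r) (q - u) := by
  ext j; fin_cases j <;> simp

lemma expo_add_single_zero (p q : ℕ) : expo p q + single 0 1 = expo (p + 1) q := by
  ext j; fin_cases j <;> simp

lemma expo_add_single_one (p q : ℕ) : expo p q + single 1 1 = expo p (q + 1) := by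
  ext j; fin_cases j <;> simp

section CommSemiring

variable {R : Type*} [CommSemiring R]

lemma coeff_expo_monomial_mul (p q r u : ℕ) (P : MvPolynomial (Fin 2) R) :
    coeff (expo p q) (monomial (expo r u) 1 * P) =
      if r ≤ p ∧ u ≤ q then coeff (expo (p - r) (q - u)) P else 0 := by
  simp [coeff_monomial_mul', expo_le_expo, expo_sub_expo]

lemma coeff_expo_pderiv_zero (p q : ℕ) (P : MvPolynomial (Fin 2) R) :
    coeff (expo p q) (pderiv 0 P) = coeff (expo (p + 1) q) P * (p + 1) := by
  simp [coeff_pderiv, expo_add_single_zero]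

lemma coeff_expo_pderiv_one (p q : ℕ) (P : MvPolynomial (Fin 2) R) :
    coeff (expo p q) (pderiv 1 P) = coeff (expo p (q + 1)) P * (q + 1) := by
  simp [coeff_pderiv, expo_add_single_one]

variable (R) in
noncomputable def eulerTypePoly : MvPolynomial (Fin 2) R :=
  X 0 ^ 4 + X 1 ^ 4 * X 0 + X 1 ^ 5

lemma eulerTypePoly_eq_sum_monomial :
    eulerTypePoly R = monomial (expo 4 0) 1 + monomial (expo 1 4) 1 + monomial (expo 0 5) 1 := by
  rw [eulerTypePoly, X_pow_eq_monomial, X_pow_eq_monomial, X_pow_eq_monomial, X, monomial_mul,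
    one_mul, add_comm (single 1 4)]
  simp only [expo, single_zero, add_zero, zero_add]

lemma coeff_expo_eulerTypePoly_mul (p q : ℕ) (P : MvPolynomial (Fin 2) R) :
    coeff (expo p q) (eulerTypePoly R * P) =
      (if 4 ≤ p then coeff (expo (p - 4) q) P else 0) +
      (if 1 ≤ p ∧ 4 ≤ q then coeff (expo (p - 1) (q - 4)) P else 0) +
      (if 5 ≤ q then coeff (expo p (q - 5)) P else 0) := by
  simp [eulerTypePoly_eq_sum_monomial, add_mul, coeff_expo_monomial_mul]

lemma linear_coeffs_of_eulerTypePoly_eq_pderiv {A B : MvPolynomial (Fin 2) R}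
    (h : eulerTypePoly R = pderiv 0 (eulerTypePoly R * A) + pderiv 1 (eulerTypePoly R * B)) :
    1 = coeff (expo 1 0) A * 5 + coeff (expo 0 1) B ∧
    0 = coeff (expo 0 1) A * 4 ∧
    0 = coeff (expo 1 0) B * 4 ∧
    1 = coeff (expo 1 0) A * 2 + (coeff (expo 0 1) B + coeff (expo 1 0) B) * 5 ∧
    1 = coeff (expo 0 1) A + coeff (expo 1 0) A + coeff (expo 0 1) B * 6 := by
  have hcoeff (p q : ℕ) := congrArg (coeff (expo p q)) h
  simp only [coeff_add, coeff_expo_pderiv_zero, coeff_expo_pderiv_one,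
    coeff_expo_eulerTypePoly_mul] at hcoeff
  have e₄₀ := hcoeff 4 0
  have e₃₁ := hcoeff 3 1
  have e₂₃ := hcoeff 2 3
  have e₁₄ := hcoeff 1 4
  have e₀₅ := hcoeff 0 5
  norm_num [eulerTypePoly_eq_sum_monomial, coeff_monomial, expo_inj] at e₄₀ e₃₁ e₂₃ e₁₄ e₀₅
  exact ⟨e₄₀, e₃₁, e₂₃, e₁₄, e₀₅⟩

end CommSemiring

theorem eulerTypePoly_ne_pderiv_add_pderiv {R : Type*} [CommRing R] (h4 : (4 : R) ≠ 0)
    (A B : MvPolynomial (Fin 2) R) :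
    eulerTypePoly R ≠ pderiv 0 (eulerTypePoly R * A) + pderiv 1 (eulerTypePoly R * B) := by
  intro h
  obtain ⟨e₄₀, e₃₁, e₂₃, e₁₄, e₀₅⟩ := linear_coeffs_of_eulerTypePoly_eq_pderiv h
  exact h4 (by linear_combination 28 * e₄₀ - 23 * e₃₁ + 145 * e₂₃ - 116 * e₁₄ + 92 * e₀₅)

/-- with `f = x⁴ + y⁴x + y⁵`, there are no polynomials `A, B` vanishing at the
origin with `f = ∂(fA)/∂x + ∂(fB)/∂y`. -/
theorem no_solution_euler_type_equation :
    ¬ ∃ A B : MvPolynomial (Fin 2) ℂ,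
      eval (fun _ => (0 : ℂ)) A = 0 ∧ eval (fun _ => (0 : ℂ)) B = 0 ∧
      (X 0 ^ 4 + X 1 ^ 4 * X 0 + X 1 ^ 5 : MvPolynomial (Fin 2) ℂ)
        = pderiv 0 ((X 0 ^ 4 + X 1 ^ 4 * X 0 + X 1 ^ 5) * A)
          + pderiv 1 ((X 0 ^ 4 + X 1 ^ 4 * X 0 + X 1 ^ 5) * B) := by
  rintro ⟨A, B, -, -, h⟩
  exact eulerTypePoly_ne_pderiv_add_pderiv (by norm_num) A B h
end

section
/- Let n ≥ 1 and work in the formal power series ring ℂ⟦z₁,…,zₙ,w₁,…,wₙ⟧. Let σ : ℂ⟦z₁,…,zₙ⟧ → ℂ⟦z,w⟧ be the natural inclusion, and let τ : ℂ⟦z₁,…,zₙ⟧ → ℂ⟦z,w⟧ be the ring homomorphism sending a series Σ a_I z^I to Σ conj(a_I) w^I (coefficientwise complex conjugation and substitution zᵢ ↦ wᵢ). Let f₁,…,f_k ∈ ℂ⟦z₁,…,zₙ⟧ have zero constant term. If g ∈ ℂ⟦z₁,…,zₙ⟧ satisfies σ(g) ∈ (σ(f₁),…,σ(f_k), τ(f₁),…,τ(f_k))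 as an ideal of ℂ⟦z,w⟧, then g ∈ (f₁,…,f_k) in ℂ⟦z₁,…,zₙ⟧. -/
open scoped Classical

/-!
Setting `w = 0` is a ring homomorphism `ℂ⟦z,w⟧ → ℂ⟦z⟧` (`MvPowerSeries.killCompl` along
`Sum.inl`). It is a left inverse of `σ`, and it kills every `τ(fᵢ)`, because the only
coefficient of `τ(fᵢ)` free of `w` is the conjugate of the constant term of `fᵢ`. Applying it
to a representation of `σ(g)` in the ideal `(σ(f), τ(f))` yields a representation of `g`
in `(f)`.
-/

open MvPowerSeries Finsupp

theorem mem_span_range_of_retraction {ι A B F : Type*} [CommSemiring A] [CommSemiring B]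
    [FunLike F B A] [RingHomClass F B A] (σ τ : A →+* B) (π : F) (hπσ : ∀ a, π (σ a) = a)
    (f : ι → A) (hπτ : ∀ i, π (τ (f i)) = 0) {g : A}
    (hg : σ g ∈ Ideal.span (Set.range (σ ∘ f) ∪ Set.range (τ ∘ f))) :
    g ∈ Ideal.span (Set.range f) := by
  have hmap := Ideal.mem_map_of_mem π hg
  rw [Ideal.map_span, hπσ] at hmap
  refine Ideal.span_le.mpr ?_ hmap
  rintro _ ⟨x, ⟨i, rfl⟩ | ⟨i, rfl⟩, rfl⟩
  · simpa [hπσ] using Ideal.subset_span (Set.mem_range_self i)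
  · simp [hπτ]

section SetSecondVariablesToZero

variable {n : ℕ} {R : Type*} [CommSemiring R]

theorem embDomain_inl_apply_inr (d : Fin n →₀ ℕ) (j : Fin n) :
    embDomain (.inl : Fin n ↪ Fin n ⊕ Fin n) d (Sum.inr j) = 0 :=
  embDomain_of_notMem_range _ _ _ (by simp)

theorem equivFunOnFinite_symm_embDomain_inl (d : Fin n →₀ ℕ) :
    equivFunOnFinite.symm (fun i => embDomain (.inl : Fin n ↪ Fin n ⊕ Fin n) d (Sum.inl i)) = d :=
  Finsupp.ext fun _ => embDomain_apply_self _ _ _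

theorem killCompl_inl_eq_of_coeff {p : MvPowerSeries (Fin n ⊕ Fin n) R}
    {q : MvPowerSeries (Fin n) R}
    (hp : ∀ e : (Fin n ⊕ Fin n) →₀ ℕ, coeff e p =
      if ∀ j, e (Sum.inr j) = 0 then coeff (equivFunOnFinite.symm fun i => e (Sum.inl i)) q
      else 0) :
    killCompl .inl p = q := by
  ext d
  rw [coeff_killCompl, hp, if_pos (embDomain_inl_apply_inr d),
    equivFunOnFinite_symm_embDomain_inl]

theorem killCompl_inl_eq_C_of_coeff {p : MvPowerSeries (Fin n ⊕ Fin n) R}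
    {q : MvPowerSeries (Fin n) R} (φ : R → R)
    (hp : ∀ e : (Fin n ⊕ Fin n) →₀ ℕ, coeff e p =
      if ∀ i, e (Sum.inl i) = 0 then φ (coeff (equivFunOnFinite.symm fun j => e (Sum.inr j)) q)
      else 0) :
    killCompl .inl p = C (φ (constantCoeff q)) := by
  ext d
  simp only [coeff_killCompl, hp, coeff_C]
  by_cases hd : d = 0
  · have : (equivFunOnFinite.symm fun _ : Fin n => (0 : ℕ)) = 0 := Finsupp.ext fun _ => rfl
    simp [hd, this]
  · have : ¬∀ i, d i = 0 := fun h => hd (Finsupp.ext h)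
    simp [hd, this]

end SetSecondVariablesToZero

theorem mem_ideal_of_complexified_mem_general
    (n k : ℕ)
    (σ τ : MvPowerSeries (Fin n) ℂ →+* MvPowerSeries (Fin n ⊕ Fin n) ℂ)
    (hσ : ∀ (g : MvPowerSeries (Fin n) ℂ) (e : (Fin n ⊕ Fin n) →₀ ℕ),
      MvPowerSeries.coeff e (σ g) =
        if ∀ j : Fin n, e (Sum.inr j) = 0
        then MvPowerSeries.coeff (Finsupp.equivFunOnFinite.symm fun i => e (Sum.inl i)) g
        else 0)
    (hτ : ∀ (g : MvPowerSeries (Fin n) ℂ) (e : (Fin n ⊕ Fin n) →₀ ℕ),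
      MvPowerSeries.coeff e (τ g) =
        if ∀ i : Fin n, e (Sum.inl i) = 0
        then (starRingEnd ℂ)
          (MvPowerSeries.coeff (Finsupp.equivFunOnFinite.symm fun j => e (Sum.inr j)) g)
        else 0)
    (f : Fin k → MvPowerSeries (Fin n) ℂ)
    (hf : ∀ i, MvPowerSeries.constantCoeff (f i) = 0)
    (g : MvPowerSeries (Fin n) ℂ)
    (hg : σ g ∈ Ideal.span (Set.range (σ ∘ f) ∪ Set.range (τ ∘ f))) :
    g ∈ Ideal.span (Set.range f) := by
  refine mem_span_range_of_retraction σ τ (killCompl (R := ℂ) .inl)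
    (fun a => killCompl_inl_eq_of_coeff (hσ a)) f (fun i => ?_) hg
  rw [killCompl_inl_eq_C_of_coeff _ (hτ (f i)), hf i, map_zero, map_zero]

/-- if a formal power series `g` in `z₁,…,zₙ` lies, after the inclusion
`σ : ℂ⟦z⟧ → ℂ⟦z,w⟧`, in the ideal generated by `σ(f₁),…,σ(f_k),τ(f₁),…,τ(f_k)` — where
`τ` conjugates coefficients and substitutes `zᵢ ↦ wᵢ` — then `g ∈ (f₁,…,f_k)` already in
`ℂ⟦z⟧`. Here `σ` and `τ` are characterized by their action on coefficients. -/
theorem mem_ideal_of_complexified_mem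
    (n k : ℕ) (hn : 1 ≤ n)
    (σ τ : MvPowerSeries (Fin n) ℂ →+* MvPowerSeries (Fin n ⊕ Fin n) ℂ)
    (hσ : ∀ (g : MvPowerSeries (Fin n) ℂ) (e : (Fin n ⊕ Fin n) →₀ ℕ),
      MvPowerSeries.coeff e (σ g) =
        if ∀ j : Fin n, e (Sum.inr j) = 0
        then MvPowerSeries.coeff (Finsupp.equivFunOnFinite.symm fun i => e (Sum.inl i)) g
        else 0)
    (hτ : ∀ (g : MvPowerSeries (Fin n) ℂ) (e : (Fin n ⊕ Fin n) →₀ ℕ),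
      MvPowerSeries.coeff e (τ g) =
        if ∀ i : Fin n, e (Sum.inl i) = 0
        then (starRingEnd ℂ)
          (MvPowerSeries.coeff (Finsupp.equivFunOnFinite.symm fun j => e (Sum.inr j)) g)
        else 0)
    (f : Fin k → MvPowerSeries (Fin n) ℂ)
    (hf : ∀ i, MvPowerSeries.constantCoeff (f i) = 0)
    (g : MvPowerSeries (Fin n) ℂ)
    (hg : σ g ∈ Ideal.span (Set.range (σ ∘ f) ∪ Set.range (τ ∘ f))) :
    g ∈ Ideal.span (Set.range f) :=
  mem_ideal_of_complexified_mem_general n k σ τ hσ hτ f hf g hg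
end
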